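/- Let H be a finite-dimensional real inner product space, let 𝒰 ⊆ H be a nonempty closed convex set, let R : H → ℝ ∪ {+∞} be a proper lower semicontinuous convex function with dom R ∩ 𝒰 nonempty, and let f : H → ℝ be differentiable with L-Lipschitz gradient for some L > 0. Let U⁰ ∈ 𝒰 and, for l = 1, …, N, let Uˡ be a minimizer over U ∈ 𝒰 of ⟨∇f(U^{l−1}), U⟩ + (L/2)‖U − U^{l−1}‖² + R(U). Then f(U^N) + R(U^N) + ∑_{l=1}^N (L/2)‖Uˡ − U^{l−1}‖² ≤ f(U⁰) + R(U⁰). -/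

import Mathlib

/-! Each step decreases `f + R` by `(L/2)‖Uˡ - U^{l-1}‖²`. The subproblem objective is
`L`-strongly convex, so at its minimizer `Uˡ` it lies at least `(L/2)‖Uˡ - U^{l-1}‖²` below its
value at `U^{l-1}`; the descent lemma bounds `f(Uˡ)` by the linearization of `f` at `U^{l-1}` plus
`(L/2)‖Uˡ - U^{l-1}‖²`. Adding the two inequalities gives the step, and the steps telescope.
Where `R(U^{l-1}) = ⊤` the step is trivial; otherwise one works with the real-valued
restriction of `R` to its effective domain. -/

open scoped RealInnerProductSpace
open Filter Topology Set

section Smooth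

variable {H : Type*} [NormedAddCommGroup H] [InnerProductSpace ℝ H] [CompleteSpace H]

theorem HasGradientAt.hasDerivAt_comp_add_smul {f : H → ℝ} {g x v : H} {t : ℝ}
    (hf : HasGradientAt f g (x + t • v)) :
    HasDerivAt (fun s : ℝ ↦ f (x + s • v)) ⟪g, v⟫ t := by
  have hline : HasDerivAt (fun s : ℝ ↦ x + s • v) v t := by
    simpa using ((hasDerivAt_id t).smul_const v).const_add x
  have hcomp := hf.hasFDerivAt.comp_hasDerivAt t hline
  simp only [InnerProductSpace.toDual_apply_apply] at hcomp
  exact hcomp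

theorem le_add_inner_add_sq_of_lipschitz_gradient {f : H → ℝ} {f' : H → H}
    (hf : ∀ x, HasGradientAt f (f' x) x) {L : ℝ} (hlip : ∀ x y, ‖f' x - f' y‖ ≤ L * ‖x - y‖)
    (x y : H) : f y ≤ f x + ⟪f' x, y - x⟫ + L / 2 * ‖y - x‖ ^ 2 := by
  set v := y - x
  have hφ (t : ℝ) : HasDerivAt (fun s : ℝ ↦ f (x + s • v)) ⟪f' (x + t • v), v⟫ t :=
    (hf _).hasDerivAt_comp_add_smul
  have hB (t : ℝ) : HasDerivAt (fun s : ℝ ↦ f x + s * ⟪f' x, v⟫ + L / 2 * s ^ 2 * ‖v‖ ^ 2)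
      (⟪f' x, v⟫ + L * t * ‖v‖ ^ 2) t := by
    refine ((((hasDerivAt_id t).mul_const ⟪f' x, v⟫).const_add (f x)).add
      (((hasDerivAt_pow 2 t).const_mul (L / 2)).mul_const (‖v‖ ^ 2))).congr_deriv ?_
    simp only [Nat.cast_ofNat]
    ring
  have hslope : ∀ t ∈ Ico (0 : ℝ) 1, ⟪f' (x + t • v), v⟫ ≤ ⟪f' x, v⟫ + L * t * ‖v‖ ^ 2 := by
    rintro t ⟨ht, -⟩
    have hcs := real_inner_le_norm (f' (x + t • v) - f' x) v
    have hgrad : ‖f' (x + t • v) - f' x‖ ≤ L * t * ‖v‖ := by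
      simpa [norm_smul, abs_of_nonneg ht, mul_assoc] using hlip (x + t • v) x
    rw [inner_sub_left] at hcs
    nlinarith [mul_le_mul_of_nonneg_right hgrad (norm_nonneg v)]
  have key := image_le_of_deriv_right_le_deriv_boundary
    (fun t _ ↦ (hφ t).continuousAt.continuousWithinAt) (fun t _ ↦ (hφ t).hasDerivWithinAt)
    (by simp) (fun t _ ↦ (hB t).continuousAt.continuousWithinAt)
    (fun t _ ↦ (hB t).hasDerivWithinAt) hslope (right_mem_Icc.2 zero_le_one)
  simpa [v] using key

end Smooth

theorem StrongConvexOn.add_sq_le_of_isMinOn {E : Type*} [NormedAddCommGroup E] [NormedSpace ℝ E]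
    {s : Set E} {m : ℝ} {φ : E → ℝ} {u x : E} (hφ : StrongConvexOn s m φ) (hu : IsMinOn φ s u)
    (hus : u ∈ s) (hx : x ∈ s) : φ u + m / 2 * ‖x - u‖ ^ 2 ≤ φ x := by
  suffices 0 ≤ φ x - φ u - m / 2 * ‖x - u‖ ^ 2 by linarith
  have hlim : Tendsto (fun t : ℝ ↦ φ x - φ u - (1 - t) * (m / 2 * ‖x - u‖ ^ 2)) (𝓝[>] 0)
      (𝓝 (φ x - φ u - m / 2 * ‖x - u‖ ^ 2)) :=
    tendsto_nhdsWithin_of_tendsto_nhds (Continuous.tendsto' (by fun_prop) 0 _ (by simp))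
  refine ge_of_tendsto hlim ?_
  filter_upwards [Ioc_mem_nhdsGT zero_lt_one] with t ⟨ht0, ht1⟩
  have hconv := hφ.2 hus hx (sub_nonneg.2 ht1) ht0.le (by ring)
  have hmin := hu (hφ.1 hus hx (sub_nonneg.2 ht1) ht0.le (by ring))
  simp only [smul_eq_mul, norm_sub_rev u x, mem_ofPred_eq] at hconv hmin
  refine nonneg_of_mul_nonneg_right ?_ ht0
  linarith

theorem ConvexOn.strongConvexOn_add_sq_norm_sub {E : Type*} [NormedAddCommGroup E]
    [InnerProductSpace ℝ E] {s : Set E} {r : E → ℝ} (hr : ConvexOn ℝ s r) (L : ℝ) (v : E) :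
    StrongConvexOn s L (fun x ↦ r x + L / 2 * ‖x - v‖ ^ 2) := by
  rw [strongConvexOn_iff_convex]
  have haff := ((-L) • innerSL ℝ v).toLinearMap.convexOn hr.1 |>.add
    (convexOn_const (L / 2 * ‖v‖ ^ 2) hr.1)
  refine (hr.add haff).congr fun x _ ↦ ?_
  simp only [Pi.add_apply, ContinuousLinearMap.coe_coe, FunLike.coe_smul,
    Pi.smul_apply, innerSL_apply_apply, smul_eq_mul, norm_sub_sq_real, real_inner_comm x v]
  ring

theorem convexOn_toReal_inter_ne_top {E : Type*} [AddCommGroup E] [Module ℝ E] {s : Set E}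
    {R : E → EReal} (hs : Convex ℝ s) (hbot : ∀ x, R x ≠ ⊥)
    (hR : ∀ x y : E, ∀ a b : ℝ, 0 ≤ a → 0 ≤ b → a + b = 1 →
      R (a • x + b • y) ≤ (a : EReal) * R x + (b : EReal) * R y) :
    ConvexOn ℝ (s ∩ {x | R x ≠ ⊤}) fun x ↦ (R x).toReal := by
  have hle {x y : E} (hx : R x ≠ ⊤) (hy : R y ≠ ⊤) {a b : ℝ} (ha : 0 ≤ a) (hb : 0 ≤ b)
      (hab : a + b = 1) :
      R (a • x + b • y) ≤ ((a * (R x).toReal + b * (R y).toReal : ℝ) : EReal) := by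
    have := hR x y a b ha hb hab
    rwa [← EReal.coe_toReal hx (hbot x), ← EReal.coe_toReal hy (hbot y)] at this
  refine ⟨?_, ?_⟩
  · rintro x ⟨hxs, hx⟩ y ⟨hys, hy⟩ a b ha hb hab
    exact ⟨hs hxs hys ha hb hab, ((hle hx hy ha hb hab).trans_lt (EReal.coe_lt_top _)).ne⟩
  · rintro x ⟨-, hx⟩ y ⟨-, hy⟩ a b ha hb hab
    exact EReal.toReal_le_toReal (hle hx hy ha hb hab) (hbot _) (EReal.coe_ne_top _)

section ProxGrad

variable {H : Type*} [NormedAddCommGroup H] [InnerProductSpace ℝ H] [CompleteSpace H]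
  {f : H → ℝ} {f' : H → H} {L : ℝ}

theorem prox_grad_step_descent {s : Set H} {r : H → ℝ} (hr : ConvexOn ℝ s r)
    (hf : ∀ x, HasGradientAt f (f' x) x) (hlip : ∀ x y, ‖f' x - f' y‖ ≤ L * ‖x - y‖) {u v : H}
    (hu : IsMinOn (fun X ↦ ⟪f' v, X⟫ + r X + L / 2 * ‖X - v‖ ^ 2) s u) (hus : u ∈ s)
    (hvs : v ∈ s) : L / 2 * ‖u - v‖ ^ 2 + (f u + r u) ≤ f v + r v := by
  have hlin : ConvexOn ℝ s fun X ↦ ⟪f' v, X⟫ + r X :=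
    ((innerSL ℝ (f' v)).toLinearMap.convexOn hr.1).add hr
  have hgrowth := (hlin.strongConvexOn_add_sq_norm_sub L v).add_sq_le_of_isMinOn hu hus hvs
  have hdesc := le_add_inner_add_sq_of_lipschitz_gradient hf hlip v u
  simp only [sub_self, norm_zero, norm_sub_rev v u] at hgrowth
  rw [inner_sub_right] at hdesc
  linarith

theorem prox_grad_step_descent_ereal {𝒰 : Set H} (h𝒰 : Convex ℝ 𝒰) {R : H → EReal}
    (hbot : ∀ x, R x ≠ ⊥)
    (hR : ∀ x y : H, ∀ a b : ℝ, 0 ≤ a → 0 ≤ b → a + b = 1 →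
      R (a • x + b • y) ≤ (a : EReal) * R x + (b : EReal) * R y)
    (hf : ∀ x, HasGradientAt f (f' x) x) (hlip : ∀ x y, ‖f' x - f' y‖ ≤ L * ‖x - y‖) {u v : H}
    (hu : u ∈ 𝒰) (hv : v ∈ 𝒰)
    (hmin : ∀ X ∈ 𝒰, ((⟪f' v, u⟫ + L / 2 * ‖u - v‖ ^ 2 : ℝ) : EReal) + R u ≤
      ((⟪f' v, X⟫ + L / 2 * ‖X - v‖ ^ 2 : ℝ) : EReal) + R X) :
    ((L / 2 * ‖u - v‖ ^ 2 : ℝ) : EReal) + (f u + R u) ≤ f v + R v := by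
  by_cases hvtop : R v = ⊤
  · simp [hvtop]
  have hutop : R u ≠ ⊤ := by
    intro hutop
    have := hmin v hv
    rw [hutop, EReal.coe_add_top, top_le_iff] at this
    exact (EReal.add_lt_top (EReal.coe_ne_top _) hvtop).ne this
  have hmin' : IsMinOn (fun X ↦ ⟪f' v, X⟫ + (R X).toReal + L / 2 * ‖X - v‖ ^ 2)
      (𝒰 ∩ {x | R x ≠ ⊤}) u := by
    rintro X ⟨hX, hXtop⟩
    have := hmin X hX
    rw [← EReal.coe_toReal hutop (hbot u), ← EReal.coe_toReal hXtop (hbot X)] at this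
    norm_cast at this
    simp only [mem_ofPred_eq]
    linarith
  have := prox_grad_step_descent (convexOn_toReal_inter_ne_top h𝒰 hbot hR) hf hlip hmin'
    ⟨hu, hutop⟩ ⟨hv, hvtop⟩
  rw [← EReal.coe_toReal hutop (hbot u), ← EReal.coe_toReal hvtop (hbot v)]
  exact_mod_cast this

end ProxGrad

theorem coe_sum_Icc_add_le_of_forall_coe_add_le {Φ : ℕ → EReal} {c : ℕ → ℝ} {N : ℕ}
    (h : ∀ l ∈ Finset.Icc 1 N, (c l : EReal) + Φ l ≤ Φ (l - 1)) :
    ((∑ l ∈ Finset.Icc 1 N, c l : ℝ) : EReal) + Φ N ≤ Φ 0 := by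
  induction N with
  | zero => simp
  | succ N ih =>
    have hstep := h (N + 1) (by simp)
    rw [Nat.add_sub_cancel] at hstep
    calc ((∑ l ∈ Finset.Icc 1 (N + 1), c l : ℝ) : EReal) + Φ (N + 1)
        = ((∑ l ∈ Finset.Icc 1 N, c l : ℝ) : EReal) + ((c (N + 1) : EReal) + Φ (N + 1)) := by
          rw [Finset.sum_Icc_succ_top (by omega), EReal.coe_add, add_assoc]
      _ ≤ ((∑ l ∈ Finset.Icc 1 N, c l : ℝ) : EReal) + Φ N := by gcongr
      _ ≤ Φ 0 := ih fun l hl ↦ h l (Finset.Icc_subset_Icc_right (by omega) hl)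

theorem prox_grad_N_steps_descent_general
    {H : Type*} [NormedAddCommGroup H] [InnerProductSpace ℝ H] [FiniteDimensional ℝ H]
    (𝒰 : Set H) (h𝒰convex : Convex ℝ 𝒰)
    (R : H → EReal)
    (hRnebot : ∀ x, R x ≠ ⊥)
    (hRconvex : ∀ x y : H, ∀ a b : ℝ, 0 ≤ a → 0 ≤ b → a + b = 1 →
      R (a • x + b • y) ≤ (a : EReal) * R x + (b : EReal) * R y)
    (f : H → ℝ) (f' : H → H) (hf : ∀ x, HasGradientAt f (f' x) x)
    (L : ℝ)
    (hlip : ∀ x y : H, ‖f' x - f' y‖ ≤ L * ‖x - y‖)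
    (N : ℕ) (U : ℕ → H) (hU0 : U 0 ∈ 𝒰)
    (hmem : ∀ l ∈ Finset.Icc 1 N, U l ∈ 𝒰)
    (hmin : ∀ l ∈ Finset.Icc 1 N, ∀ X ∈ 𝒰,
      ((⟪f' (U (l - 1)), U l⟫ + (L / 2) * ‖U l - U (l - 1)‖ ^ 2 : ℝ) : EReal) + R (U l) ≤
      ((⟪f' (U (l - 1)), X⟫ + (L / 2) * ‖X - U (l - 1)‖ ^ 2 : ℝ) : EReal) + R X) :
    ((f (U N) + ∑ l ∈ Finset.Icc 1 N, (L / 2) * ‖U l - U (l - 1)‖ ^ 2 : ℝ) : EReal) + R (U N) ≤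
      ((f (U 0) : ℝ) : EReal) + R (U 0) := by
  have hprev : ∀ l ∈ Finset.Icc 1 N, U (l - 1) ∈ 𝒰 := by
    intro l hl
    have hlN := (Finset.mem_Icc.1 hl).2
    rcases Nat.eq_zero_or_pos (l - 1) with h | h
    · rwa [h]
    · exact hmem _ (Finset.mem_Icc.2 ⟨h, by omega⟩)
  have key := coe_sum_Icc_add_le_of_forall_coe_add_le (Φ := fun n ↦ (f (U n) : EReal) + R (U n))
    fun l hl ↦ prox_grad_step_descent_ereal h𝒰convex hRnebot hRconvex hf hlip (hmem l hl)
      (hprev l hl) (hmin l hl)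
  rw [EReal.coe_add, add_comm (f (U N) : EReal), add_assoc]
  exact key

/-- descent property of `N` successive proximal gradient steps for
an `L`-smooth function `f` plus a proper lsc convex extended-real-valued
regularizer `R`, minimized over a nonempty closed convex set `𝒰`. -/
theorem prox_grad_N_steps_descent
    {H : Type*} [NormedAddCommGroup H] [InnerProductSpace ℝ H] [FiniteDimensional ℝ H]
    (𝒰 : Set H) (h𝒰ne : 𝒰.Nonempty) (h𝒰closed : IsClosed 𝒰) (h𝒰convex : Convex ℝ 𝒰)
    (R : H → EReal)
    (hRlsc : LowerSemicontinuous R)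
    (hRnebot : ∀ x, R x ≠ ⊥)
    (hRconvex : ∀ x y : H, ∀ a b : ℝ, 0 ≤ a → 0 ≤ b → a + b = 1 →
      R (a • x + b • y) ≤ (a : EReal) * R x + (b : EReal) * R y)
    (hdom : ∃ x ∈ 𝒰, R x ≠ ⊤)
    (f : H → ℝ) (f' : H → H) (hf : ∀ x, HasGradientAt f (f' x) x)
    (L : ℝ) (hL : 0 < L)
    (hlip : ∀ x y : H, ‖f' x - f' y‖ ≤ L * ‖x - y‖)
    (N : ℕ) (U : ℕ → H) (hU0 : U 0 ∈ 𝒰)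
    (hmem : ∀ l ∈ Finset.Icc 1 N, U l ∈ 𝒰)
    (hmin : ∀ l ∈ Finset.Icc 1 N, ∀ X ∈ 𝒰,
      ((⟪f' (U (l - 1)), U l⟫ + (L / 2) * ‖U l - U (l - 1)‖ ^ 2 : ℝ) : EReal) + R (U l) ≤
      ((⟪f' (U (l - 1)), X⟫ + (L / 2) * ‖X - U (l - 1)‖ ^ 2 : ℝ) : EReal) + R X) :
    ((f (U N) + ∑ l ∈ Finset.Icc 1 N, (L / 2) * ‖U l - U (l - 1)‖ ^ 2 : ℝ) : EReal) + R (U N) ≤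
      ((f (U 0) : ℝ) : EReal) + R (U 0) :=
  prox_grad_N_steps_descent_general 𝒰 h𝒰convex R hRnebot hRconvex f f' hf L hlip N U hU0 hmem hmin
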